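/- Let A₁, …, A_N be symmetric real n×n matrices and for q ∈ ℝᴺ set A(q) = Σ_{i=1}^{N} qᵢ Aᵢ. Fix f, v ∈ ℝⁿ and let q₀ ∈ ℝᴺ be such that A(q₀) is invertible. On the open set of q where A(q) is invertible define U(q) = A(q)⁻¹ f and J(q) = (1/2) (U(q) − v)ᵀ A(q) (U(q) − v). Then J is Fréchet differentiable at q₀ and its derivative is the linear functional ξ ↦ −(1/2) U(q₀)ᵀ A(ξ) U(q₀) + (1/2) vᵀ A(ξ) v, for ξ ∈ ℝᴺ. -/

import Mathlib

open Matrix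

/-- The stiffness matrix `A(q) = ∑ i, qᵢ • Aᵢ` depending linearly on `q`. -/
def stiff {n N : ℕ} (A : Fin N → Matrix (Fin n) (Fin n) ℝ) (q : Fin N → ℝ) :
    Matrix (Fin n) (Fin n) ℝ :=
  ∑ i, q i • A i

/-- The discrete solution `U(q) = A(q)⁻¹ f`. -/
noncomputable def discSol {n N : ℕ} (A : Fin N → Matrix (Fin n) (Fin n) ℝ)
    (f : Fin n → ℝ) (q : Fin N → ℝ) : Fin n → ℝ :=
  (stiff A q)⁻¹.mulVec f

/-- The discrete data-fidelity functional
`J(q) = (1/2) (U(q) - v)ᵀ A(q) (U(q) - v)` with `U(q) = A(q)⁻¹ f`. -/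
noncomputable def fidelity {n N : ℕ} (A : Fin N → Matrix (Fin n) (Fin n) ℝ)
    (f v : Fin n → ℝ) (q : Fin N → ℝ) : ℝ :=
  (1/2 : ℝ) * ((discSol A f q - v) ⬝ᵥ (stiff A q).mulVec (discSol A f q - v))

/-!
For symmetric invertible `S = A(q)` and `u = S⁻¹ f`, completing the square gives
`(u - v)ᵀ S (u - v) = fᵀ S⁻¹ f - 2 vᵀ f + vᵀ S v`, so near `q₀` the fidelity is
`½ fᵀ A(q)⁻¹ f - vᵀ f + ½ vᵀ A(q) v`. The last term is linear in `q`, and the derivative of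
matrix inversion, `ξ ↦ -A⁻¹ A(ξ) A⁻¹`, turns the first into `-½ fᵀ A⁻¹ A(ξ) A⁻¹ f`, which
equals `-½ Uᵀ A(ξ) U` because `A⁻¹` is symmetric.
-/

open scoped Matrix.Norms.L2Operator Topology

namespace Matrix

variable {𝕜 : Type*} [RCLike 𝕜] {m : Type*} [Fintype m]

theorem hasFDerivAt_nonsing_inv [DecidableEq m] {M : Matrix m m 𝕜} (hM : IsUnit M.det) :
    HasFDerivAt (fun X : Matrix m m 𝕜 => X⁻¹)
      (-ContinuousLinearMap.mulLeftRight 𝕜 _ M⁻¹ M⁻¹) M := by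
  obtain ⟨u, rfl⟩ := (isUnit_iff_isUnit_det M).mpr hM
  simpa only [nonsing_inv_eq_ringInverse, Ring.inverse_unit] using
    hasFDerivAt_ringInverse (𝕜 := 𝕜) u

def dotProductMulVecCLM (x y : m → 𝕜) : Matrix m m 𝕜 →L[𝕜] 𝕜 :=
  LinearMap.toContinuousLinearMap
    { toFun := fun M => x ⬝ᵥ M *ᵥ y
      map_add' := fun M M' => by simp only [add_mulVec, dotProduct_add]
      map_smul' := fun c M => by simp [smul_mulVec] }

@[simp]
theorem dotProductMulVecCLM_apply (x y : m → 𝕜) (M : Matrix m m 𝕜) :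
    dotProductMulVecCLM x y M = x ⬝ᵥ M *ᵥ y :=
  rfl

end Matrix

section SymmetricAlgebra

variable {R : Type*} [CommRing R] {m : Type*} [Fintype m]

theorem Matrix.IsSymm.dotProduct_mul_mul_mulVec {P : Matrix m m R} (hP : P.IsSymm)
    (B : Matrix m m R) (x : m → R) :
    x ⬝ᵥ (P * B * P) *ᵥ x = (P *ᵥ x) ⬝ᵥ B *ᵥ (P *ᵥ x) := by
  rw [← mulVec_mulVec, ← mulVec_mulVec, dotProduct_mulVec, ← mulVec_transpose, hP.eq]

theorem Matrix.IsSymm.dotProduct_inv_mulVec_sub [DecidableEq m] {S : Matrix m m R}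
    (hS : S.IsSymm) (hdet : IsUnit S.det) (f v : m → R) :
    (S⁻¹ *ᵥ f - v) ⬝ᵥ S *ᵥ (S⁻¹ *ᵥ f - v)
      = f ⬝ᵥ S⁻¹ *ᵥ f - 2 * (v ⬝ᵥ f) + v ⬝ᵥ S *ᵥ v := by
  have hSu : S *ᵥ (S⁻¹ *ᵥ f) = f := by
    rw [mulVec_mulVec, mul_nonsing_inv _ hdet, one_mulVec]
  have huSv : (S⁻¹ *ᵥ f) ⬝ᵥ S *ᵥ v = v ⬝ᵥ f := by
    rw [dotProduct_mulVec, ← mulVec_transpose, hS.eq, hSu, dotProduct_comm]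
  rw [mulVec_sub, dotProduct_sub, sub_dotProduct, sub_dotProduct, hSu, huSv,
    dotProduct_comm _ f]
  ring

end SymmetricAlgebra

variable {n N : ℕ} (A : Fin N → Matrix (Fin n) (Fin n) ℝ)

noncomputable def stiffCLM : (Fin N → ℝ) →L[ℝ] Matrix (Fin n) (Fin n) ℝ :=
  ∑ i, (ContinuousLinearMap.proj i).smulRight (A i)

@[simp]
theorem coe_stiffCLM : ⇑(stiffCLM A) = stiff A := by
  ext q
  simp [stiffCLM, stiff]

theorem stiff_isSymm {A : Fin N → Matrix (Fin n) (Fin n) ℝ} (hA : ∀ i, (A i).IsSymm)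
    (q : Fin N → ℝ) : (stiff A q).IsSymm := by
  simp only [Matrix.IsSymm, stiff, transpose_sum, transpose_smul, fun i => (hA i).eq]

theorem isOpen_setOf_isUnit_det_stiff : IsOpen {q : Fin N → ℝ | IsUnit (stiff A q).det} := by
  simp only [isUnit_iff_ne_zero]
  exact isOpen_ne_fun ((coe_stiffCLM A ▸ (stiffCLM A).continuous).matrix_det) continuous_const

theorem fidelity_eventuallyEq {A : Fin N → Matrix (Fin n) (Fin n) ℝ} (hA : ∀ i, (A i).IsSymm)
    (f v : Fin n → ℝ) {q₀ : Fin N → ℝ} (hq₀ : IsUnit (stiff A q₀).det) :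
    fidelity A f v =ᶠ[𝓝 q₀] fun q =>
      1/2 * (f ⬝ᵥ (stiff A q)⁻¹ *ᵥ f) - v ⬝ᵥ f + 1/2 * (v ⬝ᵥ stiff A q *ᵥ v) := by
  filter_upwards [(isOpen_setOf_isUnit_det_stiff A).mem_nhds hq₀] with q hq
  rw [fidelity, discSol, (stiff_isSymm hA q).dotProduct_inv_mulVec_sub hq]
  ring

/-- First-derivative formula: `J` is Fréchet differentiable at any `q₀` with `A(q₀)`
invertible, with derivative `ξ ↦ -(1/2) U(q₀)ᵀ A(ξ) U(q₀) + (1/2) vᵀ A(ξ) v`. -/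
theorem stmt_13 (n N : ℕ) (A : Fin N → Matrix (Fin n) (Fin n) ℝ)
    (hsymm : ∀ i, (A i).IsSymm)
    (f v : Fin n → ℝ) (q₀ : Fin N → ℝ) (hq₀ : IsUnit (stiff A q₀).det) :
    ∃ L : (Fin N → ℝ) →L[ℝ] ℝ,
      HasFDerivAt (fidelity A f v) L q₀ ∧
      ∀ ξ : Fin N → ℝ,
        L ξ = -((1/2 : ℝ) * (discSol A f q₀ ⬝ᵥ (stiff A ξ).mulVec (discSol A f q₀)))
              + (1/2 : ℝ) * (v ⬝ᵥ (stiff A ξ).mulVec v) := by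
  have hstiff : HasFDerivAt (stiff A) (stiffCLM A) q₀ := coe_stiffCLM A ▸ (stiffCLM A).hasFDerivAt
  have hinv := (Matrix.hasFDerivAt_nonsing_inv hq₀).comp q₀ hstiff
  have hquad := ((dotProductMulVecCLM f f).hasFDerivAt.comp q₀ hinv).const_mul (1/2 : ℝ)
  have henergy := ((dotProductMulVecCLM v v).hasFDerivAt.comp q₀ hstiff).const_mul (1/2 : ℝ)
  refine ⟨_, ((hquad.sub_const (v ⬝ᵥ f)).add henergy).congr_of_eventuallyEq
    (fidelity_eventuallyEq hsymm f v hq₀), fun ξ => ?_⟩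
  have hsandwich := (stiff_isSymm hsymm q₀).inv.dotProduct_mul_mul_mulVec (stiff A ξ) f
  simp only [_root_.add_apply, _root_.smul_apply, _root_.neg_apply,
    ContinuousLinearMap.comp_apply, ContinuousLinearMap.mulLeftRight_apply,
    dotProductMulVecCLM_apply, coe_stiffCLM,
    neg_mulVec, dotProduct_neg, hsandwich, discSol, smul_eq_mul]
  ring
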